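/- Let E be a real inner product space, θ ∈ [0, π/2), γ₁, γ₂ ∈ E unit vectors with ⟨γ₂, γ₁⟩² < 1, and set N = (cos θ · γ₁, sin θ), N' = (−sin θ · γ₁, cos θ), and n = (γ₂, 0) − cos θ · ⟨γ₂, γ₁⟩ · N in E × ℝ. Then 1 − ⟨n/‖n‖, N'⟩² ≥ 1 − ⟨γ₂, γ₁⟩² > 0; in particular, the quantity C = 1 − ⟨n/‖n‖, N'⟩² is bounded below by a positive constant independent of θ. -/

import Mathlib

/-!
Write `t = ⟨γ₂, γ₁⟩`. Since `γ₁` is a unit vector, `N` and `N'` are orthonormal, and `n` is the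
component of `(γ₂, 0)` orthogonal to `N`; hence `‖n‖² = 1 - cos²θ t²` and `⟨n, N'⟩ = -sin θ t`.
So `⟨n/‖n‖, N'⟩² = sin²θ t² / (1 - cos²θ t²) ≤ t²`, the last step being `cos²θ t² (1 - t²) ≥ 0`.
-/

open scoped RealInnerProductSpace

/-- The vector `N = (cos θ · γ₁, sin θ) ∈ E × ℝ`. -/
noncomputable def Nvec {E : Type*} [NormedAddCommGroup E] [InnerProductSpace ℝ E]
    (θ : ℝ) (γ₁ : E) : WithLp 2 (E × ℝ) :=
  (WithLp.equiv 2 (E × ℝ)).symm (Real.cos θ • γ₁, Real.sin θ)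

/-- The vector `N' = (−sin θ · γ₁, cos θ) ∈ E × ℝ`. -/
noncomputable def Nvec' {E : Type*} [NormedAddCommGroup E] [InnerProductSpace ℝ E]
    (θ : ℝ) (γ₁ : E) : WithLp 2 (E × ℝ) :=
  (WithLp.equiv 2 (E × ℝ)).symm (-(Real.sin θ) • γ₁, Real.cos θ)

/-- The vector `n = (γ₂, 0) − cos θ · ⟨γ₂, γ₁⟩ · N`. -/
noncomputable def nvec {E : Type*} [NormedAddCommGroup E] [InnerProductSpace ℝ E]
    (θ : ℝ) (γ₁ γ₂ : E) : WithLp 2 (E × ℝ) :=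
  (WithLp.equiv 2 (E × ℝ)).symm (γ₂, 0) - (Real.cos θ * ⟪γ₂, γ₁⟫) • Nvec θ γ₁

theorem norm_sub_inner_smul_sq_of_norm_eq_one {F : Type*} [NormedAddCommGroup F]
    [InnerProductSpace ℝ F] {u : F} (hu : ‖u‖ = 1) (v : F) :
    ‖v - ⟪v, u⟫ • u‖ ^ 2 = ‖v‖ ^ 2 - ⟪v, u⟫ ^ 2 := by
  rw [norm_sub_sq_real, real_inner_smul_right, norm_smul, hu, mul_one, Real.norm_eq_abs, sq_abs]
  ring

theorem sq_mul_div_one_sub_sq_mul_le {c s t : ℝ} (hcs : c ^ 2 + s ^ 2 = 1) (ht : t ^ 2 ≤ 1) :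
    (s * t) ^ 2 / (1 - c ^ 2 * t ^ 2) ≤ t ^ 2 := by
  have hc : c ^ 2 ≤ 1 := by nlinarith [sq_nonneg s]
  apply div_le_of_le_mul₀
  · nlinarith [mul_le_mul hc ht (sq_nonneg t) zero_le_one]
  · positivity
  · nlinarith [mul_nonneg (mul_nonneg (sq_nonneg c) (sq_nonneg t)) (sub_nonneg.2 ht)]

section Frame

variable {E : Type*} [NormedAddCommGroup E] [InnerProductSpace ℝ E]

theorem norm_Nvec_sq (θ : ℝ) (γ₁ : E) :
    ‖Nvec θ γ₁‖ ^ 2 = Real.cos θ ^ 2 * ‖γ₁‖ ^ 2 + Real.sin θ ^ 2 := by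
  simp [Nvec, WithLp.prod_norm_sq_eq_of_L2, norm_smul, mul_pow]

theorem norm_Nvec (θ : ℝ) {γ₁ : E} (hγ₁ : ‖γ₁‖ = 1) : ‖Nvec θ γ₁‖ = 1 := by
  rw [← pow_eq_one_iff_of_nonneg (norm_nonneg _) two_ne_zero, norm_Nvec_sq, hγ₁, one_pow,
    mul_one, Real.cos_sq_add_sin_sq]

theorem inner_Nvec_Nvec' (θ : ℝ) (γ₁ : E) :
    ⟪Nvec θ γ₁, Nvec' θ γ₁⟫ = Real.sin θ * Real.cos θ * (1 - ‖γ₁‖ ^ 2) := by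
  simp [Nvec, Nvec', WithLp.prod_inner_apply, real_inner_smul_left, real_inner_smul_right]
  ring

theorem inner_toLp_Nvec (θ : ℝ) (γ₁ γ₂ : E) :
    ⟪(WithLp.equiv 2 (E × ℝ)).symm (γ₂, 0), Nvec θ γ₁⟫ = Real.cos θ * ⟪γ₂, γ₁⟫ := by
  simp [Nvec, WithLp.prod_inner_apply, real_inner_smul_right]

theorem inner_toLp_Nvec' (θ : ℝ) (γ₁ γ₂ : E) :
    ⟪(WithLp.equiv 2 (E × ℝ)).symm (γ₂, 0), Nvec' θ γ₁⟫ = -(Real.sin θ * ⟪γ₂, γ₁⟫) := by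
  simp [Nvec', WithLp.prod_inner_apply, real_inner_smul_right]

theorem nvec_eq_sub_inner_smul (θ : ℝ) (γ₁ γ₂ : E) :
    nvec θ γ₁ γ₂ = (WithLp.equiv 2 (E × ℝ)).symm (γ₂, 0) -
      ⟪(WithLp.equiv 2 (E × ℝ)).symm (γ₂, 0), Nvec θ γ₁⟫ • Nvec θ γ₁ := by
  rw [inner_toLp_Nvec, nvec]

theorem inner_nvec_Nvec' (θ : ℝ) {γ₁ : E} (hγ₁ : ‖γ₁‖ = 1) (γ₂ : E) :
    ⟪nvec θ γ₁ γ₂, Nvec' θ γ₁⟫ = -(Real.sin θ * ⟪γ₂, γ₁⟫) := by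
  rw [nvec, inner_sub_left, real_inner_smul_left, inner_toLp_Nvec', inner_Nvec_Nvec', hγ₁]
  ring

theorem norm_nvec_sq (θ : ℝ) {γ₁ : E} (hγ₁ : ‖γ₁‖ = 1) (γ₂ : E) :
    ‖nvec θ γ₁ γ₂‖ ^ 2 = ‖γ₂‖ ^ 2 - Real.cos θ ^ 2 * ⟪γ₂, γ₁⟫ ^ 2 := by
  rw [nvec_eq_sub_inner_smul, norm_sub_inner_smul_sq_of_norm_eq_one (norm_Nvec θ hγ₁),
    inner_toLp_Nvec, mul_pow]
  simp

end Frame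

theorem stmt9_general {E : Type*} [NormedAddCommGroup E] [InnerProductSpace ℝ E]
    (θ : ℝ) (γ₁ γ₂ : E)
    (hγ₁ : ‖γ₁‖ = 1) (hγ₂ : ‖γ₂‖ = 1) (htrans : ⟪γ₂, γ₁⟫ ^ 2 < 1) :
    1 - ⟪‖nvec θ γ₁ γ₂‖⁻¹ • nvec θ γ₁ γ₂, Nvec' θ γ₁⟫ ^ 2 ≥ 1 - ⟪γ₂, γ₁⟫ ^ 2 ∧
    (0 : ℝ) < 1 - ⟪γ₂, γ₁⟫ ^ 2 := by
  refine ⟨?_, by linarith⟩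
  have hnormalized : ⟪‖nvec θ γ₁ γ₂‖⁻¹ • nvec θ γ₁ γ₂, Nvec' θ γ₁⟫ ^ 2
      = (Real.sin θ * ⟪γ₂, γ₁⟫) ^ 2 / (1 - Real.cos θ ^ 2 * ⟪γ₂, γ₁⟫ ^ 2) := by
    rw [real_inner_smul_left, inner_nvec_Nvec' θ hγ₁, mul_pow, inv_pow, norm_nvec_sq θ hγ₁,
      hγ₂, neg_sq, one_pow, inv_mul_eq_div]
  have hbound := sq_mul_div_one_sub_sq_mul_le (Real.cos_sq_add_sin_sq θ) htrans.le
  linarith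

/-- `1 − ⟨n/‖n‖, N'⟩² ≥ 1 − ⟨γ₂, γ₁⟩² > 0`: the quantity
`C = 1 − ⟨n/‖n‖, N'⟩²` is bounded below by a positive constant independent of `θ`. -/
theorem stmt9 {E : Type*} [NormedAddCommGroup E] [InnerProductSpace ℝ E]
    (θ : ℝ) (hθ : θ ∈ Set.Ico 0 (Real.pi / 2)) (γ₁ γ₂ : E)
    (hγ₁ : ‖γ₁‖ = 1) (hγ₂ : ‖γ₂‖ = 1) (htrans : ⟪γ₂, γ₁⟫ ^ 2 < 1) :
    1 - ⟪‖nvec θ γ₁ γ₂‖⁻¹ • nvec θ γ₁ γ₂, Nvec' θ γ₁⟫ ^ 2 ≥ 1 - ⟪γ₂, γ₁⟫ ^ 2 ∧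
    (0 : ℝ) < 1 - ⟪γ₂, γ₁⟫ ^ 2 :=
  stmt9_general θ γ₁ γ₂ hγ₁ hγ₂ htrans
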